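/- arXiv:1811.08338 — 4 statements merged into one kernel-verified Lean document; each statement's English description precedes it below -/
import Mathlib

section
/- Comb composition preserves stochasticity: if f : A₁×A₂ → B₁×B₂ is a 2-comb and g : B₁ → A₂ is a stochastic matrix, then the map h : A₁ → B₁×B₂ defined by h[(k,l),i] = Σ_{j∈A₂} f[(k,l),(i,j)]·g[j,k] is a stochastic matrix. -/
def IsStoch {X Y : Type*} [Fintype X] [Fintype Y] (f : Y → X → ℝ) : Prop :=
  (∀ y x, 0 ≤ f y x) ∧ ∀ x, ∑ y, f y x = 1

/-- Plugging a stochastic matrix into a 2-comb yields a stochastic matrix. -/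
theorem comb_compose_stoch {A₁ A₂ B₁ B₂ : Type*}
    [Fintype A₁] [Fintype A₂] [Fintype B₁] [Fintype B₂]
    (f : B₁ × B₂ → A₁ × A₂ → ℝ) (hf : IsStoch f)
    (f' : B₁ → A₁ → ℝ) (hf' : IsStoch f')
    (hcomb : ∀ i j k, (∑ l : B₂, f (k, l) (i, j)) = f' k i)
    (g : A₂ → B₁ → ℝ) (hg : IsStoch g) :
    IsStoch (fun (p : B₁ × B₂) (i : A₁) => ∑ j : A₂, f (p.1, p.2) (i, j) * g j p.1) := by
  constructor
  · intro p i
    exact Finset.sum_nonneg fun j _ => mul_nonneg (hf.1 _ _) (hg.1 _ _)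
  · intro i
    rw [Fintype.sum_prod_type]
    have : ∀ k : B₁, (∑ l : B₂, ∑ j : A₂, f (k, l) (i, j) * g j k) = f' k i := by
      intro k
      rw [Finset.sum_comm]
      calc (∑ j : A₂, ∑ l : B₂, f (k, l) (i, j) * g j k)
          = ∑ j : A₂, f' k i * g j k := by
            refine Finset.sum_congr rfl fun j _ => ?_
            rw [← Finset.sum_mul, hcomb]
        _ = f' k i * ∑ j : A₂, g j k := by rw [Finset.mul_sum]
        _ = f' k i := by rw [hg.2, mul_one]
    simp only [this]
    exact hf'.2 i
end

section
/- Comb disintegration (existence): for any probability distribution ω on A×B×C with all entries strictly positive, there exist a stochastic matrix g : A → B and a 2-comb f : B → A×C (i.e., a stochastic matrix f : B → A×C with the property that Σ_{k∈C} f[(i,k),j] is independent of j) such that ω[(i,j,k)] = f[(i,k),j]·g[j,i] for all i ∈ A, j ∈ B, k ∈ C. -/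
def IsDist {X : Type*} [Fintype X] (ω : X → ℝ) : Prop :=
  (∀ x, 0 ≤ ω x) ∧ ∑ x, ω x = 1

/-- Comb disintegration, existence. -/
theorem comb_disintegration_exists {A B C : Type*} [Fintype A] [Fintype B] [Fintype C]
    [Nonempty A] [Nonempty B] [Nonempty C]
    (ω : A × B × C → ℝ) (hω : IsDist ω) (hfull : ∀ p, 0 < ω p) :
    ∃ (f : A × C → B → ℝ) (g : B → A → ℝ),
      IsStoch f ∧ IsStoch g ∧
      (∀ (i : A) (j j' : B), (∑ k : C, f (i, k) j) = ∑ k : C, f (i, k) j') ∧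
      ∀ i j k, ω (i, j, k) = f (i, k) j * g j i := by
  set ωAB : A → B → ℝ := fun i j => ∑ k, ω (i, j, k) with hωAB
  set ωA : A → ℝ := fun i => ∑ j, ωAB i j with hωA
  have hABpos : ∀ i j, 0 < ωAB i j := fun i j =>
    Finset.sum_pos (fun k _ => hfull _) Finset.univ_nonempty
  have hApos : ∀ i, 0 < ωA i := fun i =>
    Finset.sum_pos (fun j _ => hABpos i j) Finset.univ_nonempty
  refine ⟨fun p j => ωA p.1 * ω (p.1, j, p.2) / ωAB p.1 j,
    fun j i => ωAB i j / ωA i, ⟨?_, ?_⟩, ⟨?_, ?_⟩, ?_, ?_⟩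
  · intro p j
    exact div_nonneg (mul_nonneg (hApos _).le (hfull _).le) (hABpos _ _).le
  · intro j
    have hsum : ∑ p : A × C, ωA p.1 * ω (p.1, j, p.2) / ωAB p.1 j
        = ∑ i : A, ∑ k : C, ωA i * ω (i, j, k) / ωAB i j := by
      rw [← Finset.sum_product']
      rfl
    rw [hsum]
    have : ∀ i : A, ∑ k : C, ωA i * ω (i, j, k) / ωAB i j = ωA i := by
      intro i
      rw [← Finset.sum_div, ← Finset.mul_sum, mul_div_assoc,
        div_self (hABpos i j).ne', mul_one]
    simp_rw [this]
    -- ∑ i, ωA i = 1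
    have : ∑ i, ωA i = ∑ p : A × B × C, ω p := by
      rw [Fintype.sum_prod_type]
      simp_rw [Fintype.sum_prod_type]
      rfl
    rw [this, hω.2]
  · intro j i
    exact div_nonneg (hABpos i j).le (hApos i).le
  · intro i
    rw [← Finset.sum_div]
    exact div_self (hApos i).ne'
  · intro i j j'
    have h : ∀ j : B, ∑ k : C, ωA i * ω (i, j, k) / ωAB i j = ωA i := by
      intro j
      rw [← Finset.sum_div, ← Finset.mul_sum, mul_div_assoc,
        div_self (hABpos i j).ne', mul_one]
    rw [h j, h j']
  · intro i j k
    have h1 := (hABpos i j).ne'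
    have h2 := (hApos i).ne'
    field_simp
end

section
/- Comb disintegration (uniqueness): if ω is a full-support probability distribution on A×B×C and (f,g), (f',g') are two pairs of a 2-comb B → A×C and a stochastic matrix A → B satisfying ω[(i,j,k)] = f[(i,k),j]·g[j,i] = f'[(i,k),j]·g'[j,i] for all i,j,k, then f = f' and g = g'. -/
/-- Comb disintegration, uniqueness. -/
theorem comb_disintegration_unique {A B C : Type*} [Fintype A] [Fintype B] [Fintype C]
    [Nonempty A] [Nonempty B] [Nonempty C]
    (ω : A × B × C → ℝ) (hω : IsDist ω) (hfull : ∀ p, 0 < ω p)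
    (f f' : A × C → B → ℝ) (g g' : B → A → ℝ)
    (hf : IsStoch f) (hf' : IsStoch f') (hg : IsStoch g) (hg' : IsStoch g')
    (hcomb : ∀ (i : A) (j j' : B), (∑ k : C, f (i, k) j) = ∑ k : C, f (i, k) j')
    (hcomb' : ∀ (i : A) (j j' : B), (∑ k : C, f' (i, k) j) = ∑ k : C, f' (i, k) j')
    (h : ∀ i j k, ω (i, j, k) = f (i, k) j * g j i)
    (h' : ∀ i j k, ω (i, j, k) = f' (i, k) j * g' j i) :
    f = f' ∧ g = g' := by
  classical
  obtain ⟨k₀⟩ := ‹Nonempty C›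
  have hgpos : ∀ j i, 0 < g j i := by
    intro j i
    have hp := hfull (i, j, k₀)
    rw [h i j k₀] at hp
    nlinarith [hf.1 (i, k₀) j, hg.1 j i]
  have hgpos' : ∀ j i, 0 < g' j i := by
    intro j i
    have hp := hfull (i, j, k₀)
    rw [h' i j k₀] at hp
    nlinarith [hf'.1 (i, k₀) j, hg'.1 j i]
  set S : A → ℝ := fun i => ∑ j, ∑ k, ω (i, j, k) with hSdef
  have hSpos : ∀ i, 0 < S i := fun i =>
    Finset.sum_pos (fun j _ => Finset.sum_pos (fun k _ => hfull _) Finset.univ_nonempty)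
      Finset.univ_nonempty
  have key : ∀ (i : A) (j : B), (∑ k, ω (i, j, k)) = S i * g j i := by
    intro i j
    have h1 : ∀ j' : B, (∑ k, ω (i, j', k)) = (∑ k : C, f (i, k) j) * g j' i := by
      intro j'
      calc (∑ k, ω (i, j', k)) = ∑ k : C, f (i, k) j' * g j' i :=
            Finset.sum_congr rfl fun k _ => h i j' k
        _ = (∑ k : C, f (i, k) j') * g j' i := by rw [Finset.sum_mul]
        _ = (∑ k : C, f (i, k) j) * g j' i := by rw [hcomb i j' j]
    have h2 : S i = ∑ k : C, f (i, k) j := by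
      calc S i = ∑ j', (∑ k : C, f (i, k) j) * g j' i :=
            Finset.sum_congr rfl fun j' _ => h1 j'
        _ = (∑ k : C, f (i, k) j) * ∑ j', g j' i := by rw [Finset.mul_sum]
        _ = ∑ k : C, f (i, k) j := by rw [hg.2 i, mul_one]
    rw [h1 j, h2]
  have key' : ∀ (i : A) (j : B), (∑ k, ω (i, j, k)) = S i * g' j i := by
    intro i j
    have h1 : ∀ j' : B, (∑ k, ω (i, j', k)) = (∑ k : C, f' (i, k) j) * g' j' i := by
      intro j'
      calc (∑ k, ω (i, j', k)) = ∑ k : C, f' (i, k) j' * g' j' i :=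
            Finset.sum_congr rfl fun k _ => h' i j' k
        _ = (∑ k : C, f' (i, k) j') * g' j' i := by rw [Finset.sum_mul]
        _ = (∑ k : C, f' (i, k) j) * g' j' i := by rw [hcomb' i j' j]
    have h2 : S i = ∑ k : C, f' (i, k) j := by
      calc S i = ∑ j', (∑ k : C, f' (i, k) j) * g' j' i :=
            Finset.sum_congr rfl fun j' _ => h1 j'
        _ = (∑ k : C, f' (i, k) j) * ∑ j', g' j' i := by rw [Finset.mul_sum]
        _ = ∑ k : C, f' (i, k) j := by rw [hg'.2 i, mul_one]
    rw [h1 j, h2]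
  have hgeq : g = g' := by
    funext j i
    have := (key i j).symm.trans (key' i j)
    exact mul_left_cancel₀ (ne_of_gt (hSpos i)) this
  refine ⟨?_, hgeq⟩
  funext p j
  obtain ⟨i, k⟩ := p
  have heq : f (i, k) j * g j i = f' (i, k) j * g j i := by
    rw [← h i j k, hgeq, ← h' i j k]
  exact mul_right_cancel₀ (ne_of_gt (hgpos j i)) heq
end

section
/- Cutting is idempotent on distributions: if ω is a full-support distribution on A×B×C with comb disintegration (f,g), and ω' is the cut distribution ω'(i,j,k) = f[(i,k),j]/|B|, then whenever ω' has full support, its own comb disintegration (f'', g'') satisfies g''[j,i] = 1/|B| for all i,j, and cutting ω' again returns ω'. -/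
/-- Cutting is idempotent: the comb disintegration of the cut distribution has the
uniform channel, and cutting again returns the same distribution. -/
theorem cut_idempotent {A B C : Type*}
    [Fintype A] [Fintype B] [Fintype C] [Nonempty A] [Nonempty B] [Nonempty C]
    (ω : A × B × C → ℝ) (hω : IsDist ω) (hfull : ∀ p, 0 < ω p)
    (f : A × C → B → ℝ) (g : B → A → ℝ) (hf : IsStoch f) (hg : IsStoch g)
    (hcomb : ∀ (i : A) (j j' : B), (∑ k : C, f (i, k) j) = ∑ k : C, f (i, k) j')
    (h : ∀ i j k, ω (i, j, k) = f (i, k) j * g j i)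
    (ω' : A × B × C → ℝ)
    (hω' : ∀ i j k, ω' (i, j, k) = f (i, k) j * (1 / (Fintype.card B : ℝ)))
    (hfull' : ∀ p, 0 < ω' p)
    (f'' : A × C → B → ℝ) (g'' : B → A → ℝ) (hf'' : IsStoch f'') (hg'' : IsStoch g'')
    (hcomb'' : ∀ (i : A) (j j' : B), (∑ k : C, f'' (i, k) j) = ∑ k : C, f'' (i, k) j')
    (h'' : ∀ i j k, ω' (i, j, k) = f'' (i, k) j * g'' j i) :
    (∀ i j, g'' j i = 1 / (Fintype.card B : ℝ)) ∧
    (∀ i j k, f'' (i, k) j * (1 / (Fintype.card B : ℝ)) = ω' (i, j, k)) := by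
  have hcB : (0:ℝ) < (Fintype.card B : ℝ) := by
    exact_mod_cast Fintype.card_pos
  -- positivity of f
  have hfpos : ∀ i j k, 0 < f (i, k) j := by
    intro i j k
    have h1 := hfull' (i, j, k)
    rw [hω'] at h1
    have h2 : (0:ℝ) < 1 / (Fintype.card B : ℝ) := by positivity
    nlinarith
  -- key equation after summing over k
  have hA : ∀ i j, (∑ k : C, f'' (i, k) j) * g'' j i
      = (∑ k : C, f (i, k) j) * (1 / (Fintype.card B : ℝ)) := by
    intro i j
    rw [Finset.sum_mul, Finset.sum_mul]
    exact Finset.sum_congr rfl fun k _ => by rw [← h'', hω']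
  -- sums agree
  have hB : ∀ i j, (∑ k : C, f'' (i, k) j) = ∑ k : C, f (i, k) j := by
    intro i j
    have hs : ∑ j' : B, (∑ k : C, f'' (i, k) j') * g'' j' i
        = ∑ j' : B, (∑ k : C, f (i, k) j') * (1 / (Fintype.card B : ℝ)) :=
      Finset.sum_congr rfl fun j' _ => hA i j'
    have hL : ∑ j' : B, (∑ k : C, f'' (i, k) j') * g'' j' i
        = ∑ k : C, f'' (i, k) j := by
      calc ∑ j' : B, (∑ k : C, f'' (i, k) j') * g'' j' i
          = ∑ j' : B, (∑ k : C, f'' (i, k) j) * g'' j' i :=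
            Finset.sum_congr rfl fun j' _ => by rw [hcomb'' i j' j]
        _ = (∑ k : C, f'' (i, k) j) * ∑ j' : B, g'' j' i := by
            rw [Finset.mul_sum]
        _ = ∑ k : C, f'' (i, k) j := by rw [hg''.2 i, mul_one]
    have hR : ∑ j' : B, (∑ k : C, f (i, k) j') * (1 / (Fintype.card B : ℝ))
        = ∑ k : C, f (i, k) j := by
      calc ∑ j' : B, (∑ k : C, f (i, k) j') * (1 / (Fintype.card B : ℝ))
          = ∑ j' : B, (∑ k : C, f (i, k) j) * (1 / (Fintype.card B : ℝ)) :=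
            Finset.sum_congr rfl fun j' _ => by rw [hcomb i j' j]
        _ = (Fintype.card B : ℝ) * ((∑ k : C, f (i, k) j) * (1 / (Fintype.card B : ℝ))) := by
            rw [Finset.sum_const, Finset.card_univ, nsmul_eq_mul]
        _ = ∑ k : C, f (i, k) j := by field_simp
    rw [hL, hR] at hs
    exact hs
  have hspos : ∀ i j, 0 < ∑ k : C, f (i, k) j := fun i j =>
    Finset.sum_pos (fun k _ => hfpos i j k) Finset.univ_nonempty
  have hguniform : ∀ i j, g'' j i = 1 / (Fintype.card B : ℝ) := by
    intro i j
    have := hA i j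
    rw [hB i j] at this
    have hp := hspos i j
    field_simp at this ⊢
    nlinarith
  refine ⟨hguniform, fun i j k => ?_⟩
  rw [h'' i j k, hguniform i j]
end
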